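/- Let g: Ω → ℂ be smooth with |g| < 1 and harmonic into the hyperbolic disk, with F satisfying F_z = -4i·g_z/(1-|g|²)² and F_{z̄} = -4i·g²·conj(g_z)/(1-|g|²)², and η = 8i·conj(g)·g_z/(1-|g|²)². Then F_{z z̄} = (i/8)|η|²·((|g|²-1)/|g|²)·g at every point where g ≠ 0, and moreover at every point ∂_{z̄}η + ∂_z(conj η) = 0. (These are the minimality equations.) -/

import Mathlib

open Complex
open ComplexConjugate

/-- Wirtinger derivative `∂_z = (∂_u - i ∂_v)/2` of a map `ℂ → ℂ`. -/
noncomputable def Wz (f : ℂ → ℂ) (p : ℂ) : ℂ :=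
  (1/2) * (fderiv ℝ f p 1 - I * fderiv ℝ f p I)

/-- Wirtinger derivative `∂_z̄ = (∂_u + i ∂_v)/2` of a map `ℂ → ℂ`. -/
noncomputable def Wzb (f : ℂ → ℂ) (p : ℂ) : ℂ :=
  (1/2) * (fderiv ℝ f p 1 + I * fderiv ℝ f p I)

/-- Wirtinger derivative `∂_z` of a real-valued function on `ℂ`. -/
noncomputable def WzR (h : ℂ → ℝ) (p : ℂ) : ℂ :=
  (1/2) * ((fderiv ℝ h p 1 : ℝ) - I * (fderiv ℝ h p I : ℝ))

/-- `1 - |w|²` as a complex number. -/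
noncomputable def NS (w : ℂ) : ℂ := ((1 - Complex.normSq w : ℝ) : ℂ)

/-- `η = 8i·conj(g)·g_z/(1-|g|²)²`. -/
noncomputable def Eta (g : ℂ → ℂ) (z : ℂ) : ℂ :=
  8 * I * conj (g z) * Wz g z / (NS (g z))^2

section Tool
variable {f h : ℂ → ℂ} {p c : ℂ}

lemma Wz_congr (hfh : f =ᶠ[nhds p] h) : Wz f p = Wz h p := by
  unfold Wz; rw [hfh.fderiv_eq]

lemma Wzb_congr (hfh : f =ᶠ[nhds p] h) : Wzb f p = Wzb h p := by
  unfold Wzb; rw [hfh.fderiv_eq]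

lemma Wz_mul (hf : DifferentiableAt ℝ f p) (hh : DifferentiableAt ℝ h p) :
    Wz (fun w => f w * h w) p = Wz f p * h p + f p * Wz h p := by
  unfold Wz; rw [fderiv_fun_mul hf hh]; simp; ring

lemma Wzb_mul (hf : DifferentiableAt ℝ f p) (hh : DifferentiableAt ℝ h p) :
    Wzb (fun w => f w * h w) p = Wzb f p * h p + f p * Wzb h p := by
  unfold Wzb; rw [fderiv_fun_mul hf hh]; simp; ring

lemma Wz_const_mul (hf : DifferentiableAt ℝ f p) (c : ℂ) :
    Wz (fun w => c * f w) p = c * Wz f p := by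
  unfold Wz; rw [fderiv_const_mul hf]; simp; ring

lemma Wzb_const_mul (hf : DifferentiableAt ℝ f p) (c : ℂ) :
    Wzb (fun w => c * f w) p = c * Wzb f p := by
  unfold Wzb; rw [fderiv_const_mul hf]; simp; ring

lemma Wz_const_sub (hf : DifferentiableAt ℝ f p) (c : ℂ) :
    Wz (fun w => c - f w) p = -Wz f p := by
  unfold Wz; rw [((hasFDerivAt_const c p).fun_sub hf.hasFDerivAt).fderiv]; simp; ring

lemma Wzb_const_sub (hf : DifferentiableAt ℝ f p) (c : ℂ) :
    Wzb (fun w => c - f w) p = -Wzb f p := by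
  unfold Wzb; rw [((hasFDerivAt_const c p).fun_sub hf.hasFDerivAt).fderiv]; simp; ring

lemma Wz_conj (_hf : DifferentiableAt ℝ f p) :
    Wz (fun w => conj (f w)) p = conj (Wzb f p) := by
  unfold Wz Wzb
  have : (fun w => (conj (f w) : ℂ)) = fun w => star (f w) := rfl
  rw [this, fderiv_star]
  simp [Complex.star_def, map_ofNat]
  ring

lemma Wzb_conj (_hf : DifferentiableAt ℝ f p) :
    Wzb (fun w => conj (f w)) p = conj (Wz f p) := by
  unfold Wz Wzb
  have : (fun w => (conj (f w) : ℂ)) = fun w => star (f w) := rfl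
  rw [this, fderiv_star]
  simp [Complex.star_def, map_ofNat]

lemma hasFDerivAt_inv_comp (hf : DifferentiableAt ℝ f p) (h0 : f p ≠ 0) :
    HasFDerivAt (fun w => (f w)⁻¹)
      ((((ContinuousLinearMap.smulRight (1 : ℂ →L[ℂ] ℂ) (-((f p)^2)⁻¹)).restrictScalars ℝ)).comp
        (fderiv ℝ f p)) p :=
  (((hasDerivAt_inv h0).hasFDerivAt).restrictScalars ℝ).comp p hf.hasFDerivAt

lemma diffAt_inv (hf : DifferentiableAt ℝ f p) (h0 : f p ≠ 0) :
    DifferentiableAt ℝ (fun w => (f w)⁻¹) p :=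
  (hasFDerivAt_inv_comp hf h0).differentiableAt

lemma fderiv_inv_comp (hf : DifferentiableAt ℝ f p) (h0 : f p ≠ 0) (v : ℂ) :
    fderiv ℝ (fun w => (f w)⁻¹) p v = -((f p)*(f p))⁻¹ * fderiv ℝ f p v := by
  rw [(hasFDerivAt_inv_comp hf h0).fderiv]
  simp [pow_two]
  ring

lemma Wz_inv (hf : DifferentiableAt ℝ f p) (h0 : f p ≠ 0) :
    Wz (fun w => (f w)⁻¹) p = -((f p)*(f p))⁻¹ * Wz f p := by
  unfold Wz; rw [fderiv_inv_comp hf h0, fderiv_inv_comp hf h0]; ring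

lemma Wzb_inv (hf : DifferentiableAt ℝ f p) (h0 : f p ≠ 0) :
    Wzb (fun w => (f w)⁻¹) p = -((f p)*(f p))⁻¹ * Wzb f p := by
  unfold Wzb; rw [fderiv_inv_comp hf h0, fderiv_inv_comp hf h0]; ring

lemma NS_eq (w : ℂ) : NS w = 1 - w * conj w := by
  rw [Complex.mul_conj, NS]; push_cast; ring

lemma conj_NS (w : ℂ) : conj (NS w) = NS w := by
  rw [NS, Complex.conj_ofReal]

lemma NS_ne {w : ℂ} (h : ‖w‖ < 1) : NS w ≠ 0 := by
  rw [NS]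
  have h2 : Complex.normSq w < 1 := by
    rw [← Complex.sq_norm]
    nlinarith [norm_nonneg w]
  exact Complex.ofReal_ne_zero.mpr (by linarith)

lemma diff_Wz {g : ℂ → ℂ} {Ω : Set ℂ} (hΩ : IsOpen Ω) (hg : ContDiffOn ℝ (⊤ : ℕ∞) g Ω)
    {z : ℂ} (hz : z ∈ Ω) : DifferentiableAt ℝ (Wz g) z := by
  have hD : ContDiffOn ℝ (⊤ : ℕ∞) (fderiv ℝ g) Ω := hg.fderiv_of_isOpen hΩ (by simp)
  have hD' : DifferentiableAt ℝ (fderiv ℝ g) z :=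
    (hD.differentiableOn (by simp)).differentiableAt (hΩ.mem_nhds hz)
  have h1 : DifferentiableAt ℝ (fun w => fderiv ℝ g w 1) z :=
    hD'.clm_apply (differentiableAt_const _)
  have hI : DifferentiableAt ℝ (fun w => fderiv ℝ g w I) z :=
    hD'.clm_apply (differentiableAt_const _)
  exact (differentiableAt_const _).mul (h1.sub ((differentiableAt_const _).mul hI))

end Tool

section Core
variable {g : ℂ → ℂ} {z : ℂ}

lemma diff_conj (dg : DifferentiableAt ℝ g z) :
    DifferentiableAt ℝ (fun w => conj (g w)) z := dg.star

lemma Wz_Q (dg : DifferentiableAt ℝ g z) (dcg : DifferentiableAt ℝ (fun w => conj (g w)) z)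
    (h0 : (1 : ℂ) - g z * conj (g z) ≠ 0) :
    Wz (fun w => ((1 - g w * conj (g w)) * (1 - g w * conj (g w)))⁻¹) z
      = (((1 - g z * conj (g z)) * (1 - g z * conj (g z)))
          * ((1 - g z * conj (g z)) * (1 - g z * conj (g z))))⁻¹
        * (2 * (1 - g z * conj (g z)) * (Wz g z * conj (g z) + g z * conj (Wzb g z))) := by
  have dq : DifferentiableAt ℝ (fun w => 1 - g w * conj (g w)) z :=
    (differentiableAt_const 1).sub (dg.mul dcg)
  have e1 : Wz (fun w => ((1 - g w * conj (g w)) * (1 - g w * conj (g w)))⁻¹) z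
      = -(((1 - g z * conj (g z)) * (1 - g z * conj (g z)))
          * ((1 - g z * conj (g z)) * (1 - g z * conj (g z))))⁻¹
        * Wz (fun w => (1 - g w * conj (g w)) * (1 - g w * conj (g w))) z :=
    Wz_inv (dq.mul dq) (mul_ne_zero h0 h0)
  have e2 : Wz (fun w => (1 - g w * conj (g w)) * (1 - g w * conj (g w))) z
      = Wz (fun w => 1 - g w * conj (g w)) z * (1 - g z * conj (g z))
        + (1 - g z * conj (g z)) * Wz (fun w => 1 - g w * conj (g w)) z := Wz_mul dq dq
  have e3 : Wz (fun w => 1 - g w * conj (g w)) z = -Wz (fun w => g w * conj (g w)) z :=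
    Wz_const_sub (dg.mul dcg) 1
  have e4 : Wz (fun w => g w * conj (g w)) z
      = Wz g z * conj (g z) + g z * Wz (fun w => conj (g w)) z := Wz_mul dg dcg
  rw [e1, e2, e3, e4, Wz_conj dg]; ring

lemma Wzb_Q (dg : DifferentiableAt ℝ g z) (dcg : DifferentiableAt ℝ (fun w => conj (g w)) z)
    (h0 : (1 : ℂ) - g z * conj (g z) ≠ 0) :
    Wzb (fun w => ((1 - g w * conj (g w)) * (1 - g w * conj (g w)))⁻¹) z
      = (((1 - g z * conj (g z)) * (1 - g z * conj (g z)))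
          * ((1 - g z * conj (g z)) * (1 - g z * conj (g z))))⁻¹
        * (2 * (1 - g z * conj (g z)) * (Wzb g z * conj (g z) + g z * conj (Wz g z))) := by
  have dq : DifferentiableAt ℝ (fun w => 1 - g w * conj (g w)) z :=
    (differentiableAt_const 1).sub (dg.mul dcg)
  have e1 : Wzb (fun w => ((1 - g w * conj (g w)) * (1 - g w * conj (g w)))⁻¹) z
      = -(((1 - g z * conj (g z)) * (1 - g z * conj (g z)))
          * ((1 - g z * conj (g z)) * (1 - g z * conj (g z))))⁻¹
        * Wzb (fun w => (1 - g w * conj (g w)) * (1 - g w * conj (g w))) z :=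
    Wzb_inv (dq.mul dq) (mul_ne_zero h0 h0)
  have e2 : Wzb (fun w => (1 - g w * conj (g w)) * (1 - g w * conj (g w))) z
      = Wzb (fun w => 1 - g w * conj (g w)) z * (1 - g z * conj (g z))
        + (1 - g z * conj (g z)) * Wzb (fun w => 1 - g w * conj (g w)) z := Wzb_mul dq dq
  have e3 : Wzb (fun w => 1 - g w * conj (g w)) z = -Wzb (fun w => g w * conj (g w)) z :=
    Wzb_const_sub (dg.mul dcg) 1
  have e4 : Wzb (fun w => g w * conj (g w)) z
      = Wzb g z * conj (g z) + g z * Wzb (fun w => conj (g w)) z := Wzb_mul dg dcg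
  rw [e1, e2, e3, e4, Wzb_conj dg]; ring

end Core


lemma alg1 (a ca A cA B D : ℂ) (hD : D ≠ 0) (ha : a ≠ 0) (hca : ca ≠ 0)
    (hDdef : a * ca - 1 = -D) :
    -4*I * (-(2*ca/D*A*B) * (D*D)⁻¹ + A * ((D*D*(D*D))⁻¹ * (2*D*(B*ca + a*cA))))
    = I/8 * (8*I*ca*A/(D*D) * (-8*I*a*cA/(D*D))) * ((a*ca-1)/(a*ca)) * a := by
  rw [hDdef]
  field_simp
  ring_nf
  rw [Complex.I_sq]
  ring_nf

set_option maxHeartbeats 1000000 in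
theorem stmt4 (Ω : Set ℂ) (hΩ : IsOpen Ω) (g F : ℂ → ℂ)
    (hg : ContDiffOn ℝ (⊤ : ℕ∞) g Ω) (hF : ContDiffOn ℝ (⊤ : ℕ∞) F Ω)
    (hlt : ∀ z ∈ Ω, ‖g z‖ < 1)
    (hharm : ∀ z ∈ Ω, Wzb (Wz g) z + (2 * conj (g z) / NS (g z)) * Wz g z * Wzb g z = 0)
    (hF1 : ∀ z ∈ Ω, Wz F z = -4 * I * Wz g z / (NS (g z))^2)
    (hF2 : ∀ z ∈ Ω, Wzb F z = -4 * I * (g z)^2 * conj (Wz g z) / (NS (g z))^2) :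
    (∀ z ∈ Ω, g z ≠ 0 →
      Wzb (Wz F) z
        = (I/8) * ((Complex.normSq (Eta g z) : ℝ) : ℂ)
            * (((Complex.normSq (g z) - 1) / Complex.normSq (g z) : ℝ) : ℂ) * g z) ∧
    (∀ z ∈ Ω, Wzb (Eta g) z + Wz (fun w => conj (Eta g w)) z = 0) := by
  constructor
  · intro z hz hgz0
    have dg : DifferentiableAt ℝ g z :=
      (hg.differentiableOn (by simp)).differentiableAt (hΩ.mem_nhds hz)
    have dcg : DifferentiableAt ℝ (fun w => conj (g w)) z := diff_conj dg
    have dWzg : DifferentiableAt ℝ (Wz g) z := diff_Wz hΩ hg hz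
    have h0 : (1 : ℂ) - g z * conj (g z) ≠ 0 := by
      rw [← NS_eq]; exact NS_ne (hlt z hz)
    have dq : DifferentiableAt ℝ (fun w => 1 - g w * conj (g w)) z :=
      (differentiableAt_const 1).sub (dg.mul dcg)
    have dQ : DifferentiableAt ℝ
        (fun w => ((1 - g w * conj (g w)) * (1 - g w * conj (g w)))⁻¹) z :=
      diffAt_inv (dq.mul dq) (mul_ne_zero h0 h0)
    have hev : Wz F =ᶠ[nhds z]
        fun w => (-4*I) * (Wz g w * ((1 - g w * conj (g w)) * (1 - g w * conj (g w)))⁻¹) := by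
      filter_upwards [hΩ.mem_nhds hz] with w hw
      have hNw : (1 : ℂ) - g w * conj (g w) ≠ 0 := by
        rw [← NS_eq]; exact NS_ne (hlt w hw)
      rw [hF1 w hw, NS_eq, pow_two]
      field_simp
    have s1 : Wzb (Wz F) z = Wzb
        (fun w => (-4*I) * (Wz g w * ((1 - g w * conj (g w)) * (1 - g w * conj (g w)))⁻¹)) z :=
      Wzb_congr hev
    have s2 : Wzb
        (fun w => (-4*I) * (Wz g w * ((1 - g w * conj (g w)) * (1 - g w * conj (g w)))⁻¹)) z
        = (-4*I) * Wzb (fun w => Wz g w * ((1 - g w * conj (g w)) * (1 - g w * conj (g w)))⁻¹) z :=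
      Wzb_const_mul (dWzg.mul dQ) (-4*I)
    have s3 : Wzb (fun w => Wz g w * ((1 - g w * conj (g w)) * (1 - g w * conj (g w)))⁻¹) z
        = Wzb (Wz g) z * ((1 - g z * conj (g z)) * (1 - g z * conj (g z)))⁻¹
          + Wz g z * Wzb (fun w => ((1 - g w * conj (g w)) * (1 - g w * conj (g w)))⁻¹) z :=
      Wzb_mul dWzg dQ
    have hH : Wzb (Wz g) z = -((2 * conj (g z) / NS (g z)) * Wz g z * Wzb g z) :=
      eq_neg_of_add_eq_zero_left (hharm z hz)
    rw [NS_eq] at hH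
    have hca : conj (g z) ≠ 0 := by simpa using hgz0
    have hEta : Eta g z = 8*I*conj (g z)*Wz g z
        / ((1 - g z * conj (g z)) * (1 - g z * conj (g z))) := by
      unfold Eta; rw [NS_eq, pow_two]
    have hconjEta : conj (Eta g z) = (-8)*I*(g z)*conj (Wz g z)
        / ((1 - g z * conj (g z)) * (1 - g z * conj (g z))) := by
      rw [hEta, map_div₀]
      simp only [map_mul, map_sub, map_one, map_ofNat, Complex.conj_I, Complex.conj_conj]
      ring
    have hnormEta : ((Complex.normSq (Eta g z) : ℝ) : ℂ) = Eta g z * conj (Eta g z) :=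
      (Complex.mul_conj _).symm
    have hcast : (((Complex.normSq (g z) - 1) / Complex.normSq (g z) : ℝ) : ℂ)
        = ((g z * conj (g z)) - 1) / (g z * conj (g z)) := by
      rw [Complex.mul_conj]; push_cast; ring
    rw [s1, s2, s3, hH, Wzb_Q dg dcg h0, hnormEta, hconjEta, hEta, hcast]
    exact alg1 (g z) (conj (g z)) (Wz g z) (conj (Wz g z)) (Wzb g z)
      (1 - g z * conj (g z)) h0 hgz0 hca (by ring)
  · intro z hz
    have dg : DifferentiableAt ℝ g z :=
      (hg.differentiableOn (by simp)).differentiableAt (hΩ.mem_nhds hz)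
    have dcg : DifferentiableAt ℝ (fun w => conj (g w)) z := diff_conj dg
    have dWzg : DifferentiableAt ℝ (Wz g) z := diff_Wz hΩ hg hz
    have dcWzg : DifferentiableAt ℝ (fun w => conj (Wz g w)) z := diff_conj dWzg
    have h0 : (1 : ℂ) - g z * conj (g z) ≠ 0 := by
      rw [← NS_eq]; exact NS_ne (hlt z hz)
    have dq : DifferentiableAt ℝ (fun w => 1 - g w * conj (g w)) z :=
      (differentiableAt_const 1).sub (dg.mul dcg)
    have dQ : DifferentiableAt ℝ
        (fun w => ((1 - g w * conj (g w)) * (1 - g w * conj (g w)))⁻¹) z :=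
      diffAt_inv (dq.mul dq) (mul_ne_zero h0 h0)
    have hEtaFun : Eta g = fun w => (8*I) *
        (conj (g w) * (Wz g w * ((1 - g w * conj (g w)) * (1 - g w * conj (g w)))⁻¹)) := by
      funext w
      unfold Eta
      rw [NS_eq, pow_two, div_eq_mul_inv]
      ring
    have hConjFun : (fun w => conj (Eta g w)) = fun w => (-8*I) *
        (g w * (conj (Wz g w) * ((1 - g w * conj (g w)) * (1 - g w * conj (g w)))⁻¹)) := by
      funext w
      unfold Eta
      rw [map_div₀]
      simp only [map_mul, map_pow, conj_NS, map_ofNat, Complex.conj_I, Complex.conj_conj]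
      rw [NS_eq, pow_two, div_eq_mul_inv]
      ring
    rw [hConjFun, hEtaFun]
    have t1 : Wzb (fun w => (8*I) *
        (conj (g w) * (Wz g w * ((1 - g w * conj (g w)) * (1 - g w * conj (g w)))⁻¹))) z
        = (8*I) * Wzb (fun w =>
          conj (g w) * (Wz g w * ((1 - g w * conj (g w)) * (1 - g w * conj (g w)))⁻¹)) z :=
      Wzb_const_mul (dcg.mul (dWzg.mul dQ)) (8*I)
    have t2 : Wzb (fun w =>
        conj (g w) * (Wz g w * ((1 - g w * conj (g w)) * (1 - g w * conj (g w)))⁻¹)) z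
        = Wzb (fun w => conj (g w)) z *
            (Wz g z * ((1 - g z * conj (g z)) * (1 - g z * conj (g z)))⁻¹)
          + conj (g z) * Wzb (fun w =>
              Wz g w * ((1 - g w * conj (g w)) * (1 - g w * conj (g w)))⁻¹) z :=
      Wzb_mul dcg (dWzg.mul dQ)
    have t3 : Wzb (fun w => Wz g w * ((1 - g w * conj (g w)) * (1 - g w * conj (g w)))⁻¹) z
        = Wzb (Wz g) z * ((1 - g z * conj (g z)) * (1 - g z * conj (g z)))⁻¹
          + Wz g z * Wzb (fun w => ((1 - g w * conj (g w)) * (1 - g w * conj (g w)))⁻¹) z :=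
      Wzb_mul dWzg dQ
    have u1 : Wz (fun w => (-8*I) *
        (g w * (conj (Wz g w) * ((1 - g w * conj (g w)) * (1 - g w * conj (g w)))⁻¹))) z
        = (-8*I) * Wz (fun w =>
          g w * (conj (Wz g w) * ((1 - g w * conj (g w)) * (1 - g w * conj (g w)))⁻¹)) z :=
      Wz_const_mul (dg.mul (dcWzg.mul dQ)) (-8*I)
    have u2 : Wz (fun w =>
        g w * (conj (Wz g w) * ((1 - g w * conj (g w)) * (1 - g w * conj (g w)))⁻¹)) z
        = Wz g z * (conj (Wz g z) * ((1 - g z * conj (g z)) * (1 - g z * conj (g z)))⁻¹)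
          + g z * Wz (fun w =>
              conj (Wz g w) * ((1 - g w * conj (g w)) * (1 - g w * conj (g w)))⁻¹) z :=
      Wz_mul dg (dcWzg.mul dQ)
    have u3 : Wz (fun w => conj (Wz g w) * ((1 - g w * conj (g w)) * (1 - g w * conj (g w)))⁻¹) z
        = Wz (fun w => conj (Wz g w)) z * ((1 - g z * conj (g z)) * (1 - g z * conj (g z)))⁻¹
          + conj (Wz g z) * Wz (fun w => ((1 - g w * conj (g w)) * (1 - g w * conj (g w)))⁻¹) z :=
      Wz_mul dcWzg dQ
    have hH : Wzb (Wz g) z = -((2 * conj (g z) / NS (g z)) * Wz g z * Wzb g z) :=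
      eq_neg_of_add_eq_zero_left (hharm z hz)
    rw [NS_eq] at hH
    rw [t1, t2, t3, u1, u2, u3, Wzb_conj dg, Wz_conj dWzg,
      Wz_Q dg dcg h0, Wzb_Q dg dcg h0, hH]
    have h0' : (1 : ℂ) - conj (g z) * g z ≠ 0 := by rw [mul_comm]; exact h0
    simp only [map_neg, map_mul, map_div₀, map_sub, map_one, map_ofNat, Complex.conj_conj]
    field_simp [h0, h0']
    ring_nf
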